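/- Let $H : [0,1] \to [0,1]^d$ be the Hilbert space-filling curve and let $A = H([p,q])$ for $0 \le p < q \le 1$. Then the $d$-dimensional Lebesgue measure of $A$ equals $q - p$, and if $x \sim \mathrm{Unif}([p,q])$ then $H(x) \sim \mathrm{Unif}(A)$. -/

import Mathlib

open MeasureTheory ProbabilityTheory Filter Topology
open scoped NNReal ENNReal

/-- The unit cube `[0,1]^d` in Euclidean space. -/
def unitCube (d : ℕ) : Set (EuclideanSpace ℝ (Fin d)) :=
  (WithLp.ofLp : EuclideanSpace ℝ (Fin d) → (Fin d → ℝ)) ⁻¹' Set.univ.pi fun _ => Set.Icc (0 : ℝ) 1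

/-- The uniform distribution on a set `E` of Euclidean space. -/
noncomputable def unifOn {d : ℕ} (E : Set (EuclideanSpace ℝ (Fin d))) :
    Measure (EuclideanSpace ℝ (Fin d)) :=
  (volume E)⁻¹ • volume.restrict E

/-- The uniform distribution on a set of reals. -/
noncomputable def unifOnReal (I : Set ℝ) : Measure ℝ :=
  (volume I)⁻¹ • volume.restrict I

/-- A predicate capturing the defining recursive property of the `d`-dimensional Hilbert
space-filling curve: it is a continuous surjection from `[0,1]` onto `[0,1]^d` mapping each
dyadic interval of length `2^(-dm)` onto an axis-parallel subcube of side `2^(-m)`. -/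
def IsHilbertCurve (d : ℕ) (H : ℝ → EuclideanSpace ℝ (Fin d)) : Prop :=
  Continuous H ∧
  H '' Set.Icc (0 : ℝ) 1 = unitCube d ∧
  ∀ m k : ℕ, k < 2 ^ (d * m) →
    ∃ a : EuclideanSpace ℝ (Fin d),
      H '' Set.Icc ((k : ℝ) / 2 ^ (d * m)) (((k : ℝ) + 1) / 2 ^ (d * m)) =
        (WithLp.ofLp : EuclideanSpace ℝ (Fin d) → (Fin d → ℝ)) ⁻¹'
          Set.univ.pi fun i => Set.Icc (a i) (a i + (1 : ℝ) / 2 ^ m)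

/-!
The `2^{dm}` grid intervals of length `2^{-dm}` are mapped onto cubes of volume `2^{-dm}` that
cover the unit cube, which has volume `1`; hence any `n` of these cubes jointly have volume at
least `n 2^{-dm}`. Approximating `H⁻¹(U) ∩ [0,1]`, for `U` open, by the grid intervals whose image
lies in `U` (continuity of `H`) gives `H_*(λ|[0,1]) ≤ λ` on open sets, hence everywhere by outer
regularity. Covering `[p,q]` by the grid intervals that meet it gives `λ(H[p,q]) ≤ q - p`.
So `H_*(λ|[p,q])`, which is carried by `A = H[p,q]` and has mass `q - p`, lies below `λ|A`, whose
mass is at most `q - p`: the two measures coincide.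
-/

open Set Finset

noncomputable def gridIcc (N k : ℕ) : Set ℝ :=
  Icc ((k : ℝ) / N) ((k + 1) / N)

section Grid

variable {N k : ℕ}

lemma volume_gridIcc (hN : N ≠ 0) : volume (gridIcc N k) = (N : ℝ≥0∞)⁻¹ := by
  rw [gridIcc, Real.volume_Icc, ← sub_div, add_sub_cancel_left, one_div,
    ENNReal.ofReal_inv_of_pos (by positivity), ENNReal.ofReal_natCast]

lemma volume_Ico_grid (hN : N ≠ 0) :
    volume (Ico ((k : ℝ) / N) ((k + 1) / N)) = (N : ℝ≥0∞)⁻¹ := by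
  rw [Real.volume_Ico, ← Real.volume_Icc]
  exact volume_gridIcc hN

lemma exists_mem_gridIcc (hN : N ≠ 0) {t : ℝ} (ht : t ∈ Icc (0 : ℝ) 1) :
    ∃ k < N, t ∈ gridIcc N k := by
  have hN' : (0 : ℝ) < N := by positivity
  have htN : 0 ≤ t * N := mul_nonneg ht.1 hN'.le
  refine ⟨min ⌊t * N⌋₊ (N - 1), by omega, ?_, ?_⟩
  · rw [div_le_iff₀ hN']
    calc ((min ⌊t * N⌋₊ (N - 1) : ℕ) : ℝ) ≤ ⌊t * N⌋₊ := by exact_mod_cast min_le_left _ _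
      _ ≤ t * N := Nat.floor_le htN
  · rw [le_div_iff₀ hN']
    rcases le_total ⌊t * N⌋₊ (N - 1) with h | h
    · rw [min_eq_left h]
      exact (Nat.lt_floor_add_one _).le
    · rw [min_eq_right h, Nat.cast_sub (by omega), Nat.cast_one, sub_add_cancel]
      nlinarith [ht.2]

lemma dist_le_of_mem_gridIcc {x y : ℝ} (hx : x ∈ gridIcc N k) (hy : y ∈ gridIcc N k) :
    dist x y ≤ (N : ℝ)⁻¹ :=
  (Real.dist_le_of_mem_Icc hx hy).trans_eq (by rw [← sub_div, add_sub_cancel_left, one_div])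

lemma card_mul_inv_le_of_gridIcc_subset (hN : N ≠ 0) {S : Finset ℕ} {a b : ℝ}
    (hS : ∀ k ∈ S, gridIcc N k ⊆ Icc a b) :
    (#S : ℝ≥0∞) * (N : ℝ≥0∞)⁻¹ ≤ ENNReal.ofReal (b - a) := by
  have hdisj :
      Pairwise (Function.onFun Disjoint fun k : ℕ => Ico ((k : ℝ) / N) ((k + 1) / N)) := by
    simpa [Order.succ_eq_add_one] using
      Monotone.pairwise_disjoint_on_Ico_succ (f := fun k : ℕ => (k : ℝ) / N)
        fun _ _ h => by dsimp only; gcongr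
  calc (#S : ℝ≥0∞) * (N : ℝ≥0∞)⁻¹ = ∑ k ∈ S, volume (Ico ((k : ℝ) / N) ((k + 1) / N)) := by
        simp [volume_Ico_grid hN]
    _ = volume (⋃ k ∈ S, Ico ((k : ℝ) / N) ((k + 1) / N)) :=
        (measure_biUnion_finset (hdisj.set_pairwise _) fun _ _ => measurableSet_Ico).symm
    _ ≤ volume (Icc a b) :=
        measure_mono (iUnion₂_subset fun k hk => Ico_subset_Icc_self.trans (hS k hk))
    _ = ENNReal.ofReal (b - a) := Real.volume_Icc

end Grid

lemma EuclideanSpace.volume_preimage_ofLp_pi_Icc {ι : Type*} [Fintype ι] (a b : ι → ℝ) :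
    volume ((WithLp.ofLp : EuclideanSpace ℝ ι → ι → ℝ) ⁻¹' univ.pi fun i => Icc (a i) (b i)) =
      ∏ i, ENNReal.ofReal (b i - a i) := by
  rw [(PiLp.volume_preserving_ofLp ι).measure_preimage
    (MeasurableSet.univ_pi fun _ => measurableSet_Icc).nullMeasurableSet, volume_pi_pi]
  simp only [Real.volume_Icc]

lemma volume_unitCube (d : ℕ) : volume (unitCube d) = 1 := by
  rw [unitCube, EuclideanSpace.volume_preimage_ofLp_pi_Icc (fun _ => 0) fun _ => 1]
  simp

lemma tendsto_inv_two_pow_mul_atTop {d : ℕ} (hd : d ≠ 0) :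
    Tendsto (fun m : ℕ => (((2 ^ (d * m) : ℕ) : ℝ))⁻¹) atTop (𝓝 0) := by
  have h : Tendsto (fun m : ℕ => (2 ^ d) ^ m) atTop atTop :=
    tendsto_pow_atTop_atTop_of_one_lt (Nat.one_lt_two_pow hd)
  simp_rw [← pow_mul] at h
  exact tendsto_inv_atTop_zero.comp (tendsto_natCast_atTop_atTop.comp h)

lemma MeasureTheory.measure_le_of_forall_eventually_mem {α : Type*} [MeasurableSpace α]
    {μ : Measure α} {s : Set α} {B : ℕ → Set α} {c : ℝ≥0∞}
    (hs : ∀ x ∈ s, ∀ᶠ m in atTop, x ∈ B m) (hB : ∀ m, μ (B m) ≤ c) : μ s ≤ c := by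
  have hmono : Monotone fun m => ⋂ j ≥ m, B j :=
    fun a b hab => biInter_mono (fun j hj => hab.trans hj) fun _ _ => subset_rfl
  calc μ s ≤ μ (⋃ m, ⋂ j ≥ m, B j) := measure_mono fun x hx =>
        mem_iUnion.2 ((eventually_atTop.1 (hs x hx)).imp fun _ h => mem_iInter₂.2 h)
    _ = ⨆ m, μ (⋂ j ≥ m, B j) := hmono.measure_iUnion
    _ ≤ c := iSup_le fun m => (measure_mono (biInter_subset_of_mem le_rfl)).trans (hB m)

lemma MeasureTheory.Measure.le_of_forall_isOpen_le {α : Type*} [TopologicalSpace α]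
    [MeasurableSpace α] {μ ν : Measure α} [ν.OuterRegular]
    (h : ∀ U, IsOpen U → μ U ≤ ν U) : μ ≤ ν :=
  Measure.le_iff'.2 fun s => by
    rw [s.measure_eq_iInf_isOpen ν]
    exact le_iInf₂ fun U hsU => le_iInf fun hU => (measure_mono hsU).trans (h U hU)

namespace IsHilbertCurve

variable {d m k : ℕ} {H : ℝ → EuclideanSpace ℝ (Fin d)}

lemma volume_image_gridIcc (hH : IsHilbertCurve d H) (hk : k < 2 ^ (d * m)) :
    volume (H '' gridIcc (2 ^ (d * m)) k) = ((2 ^ (d * m) : ℕ) : ℝ≥0∞)⁻¹ := by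
  obtain ⟨a, ha⟩ := hH.2.2 m k hk
  rw [gridIcc, Nat.cast_pow, Nat.cast_ofNat, ha,
    EuclideanSpace.volume_preimage_ofLp_pi_Icc (fun i => a i) fun i => a i + 1 / 2 ^ m]
  simp [ENNReal.ofReal_inv_of_pos, pow_mul, ← ENNReal.inv_pow, pow_right_comm _ m d]

lemma volume_image_Icc_le_add (hH : IsHilbertCurve d H) (m : ℕ) {p q : ℝ} (hp : 0 ≤ p)
    (hq : q ≤ 1) :
    volume (H '' Icc p q) ≤ ENNReal.ofReal (q - p + 2 * ((2 ^ (d * m) : ℕ) : ℝ)⁻¹) := by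
  classical
  set N := 2 ^ (d * m)
  have hN : N ≠ 0 := by positivity
  set S := (range N).filter fun k => (gridIcc N k ∩ Icc p q).Nonempty
  have hcover : H '' Icc p q ⊆ ⋃ k ∈ S, H '' gridIcc N k := by
    rintro _ ⟨t, ht, rfl⟩
    obtain ⟨k, hk, htk⟩ := exists_mem_gridIcc hN ⟨hp.trans ht.1, ht.2.trans hq⟩
    exact mem_biUnion (mem_filter.2 ⟨mem_range.2 hk, t, htk, ht⟩) ⟨t, htk, rfl⟩
  have hnear : ∀ k ∈ S, gridIcc N k ⊆ Icc (p - (N : ℝ)⁻¹) (q + (N : ℝ)⁻¹) := by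
    intro k hk x hx
    obtain ⟨s, hs, hspq⟩ := (mem_filter.1 hk).2
    have hxs := abs_sub_le_iff.1 (Real.dist_eq x s ▸ dist_le_of_mem_gridIcc hx hs)
    constructor <;> linarith [hspq.1, hspq.2]
  calc volume (H '' Icc p q) ≤ ∑ k ∈ S, volume (H '' gridIcc N k) :=
        (measure_mono hcover).trans (measure_biUnion_finset_le _ _)
    _ = #S * (N : ℝ≥0∞)⁻¹ := by
        rw [sum_congr rfl fun k hk => hH.volume_image_gridIcc (mem_range.1 (mem_filter.1 hk).1),
          sum_const, nsmul_eq_mul]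
    _ ≤ _ := (card_mul_inv_le_of_gridIcc_subset hN hnear).trans_eq (by ring_nf)

lemma volume_image_Icc_le (hH : IsHilbertCurve d H) (hd : d ≠ 0) {p q : ℝ} (hp : 0 ≤ p)
    (hq : q ≤ 1) : volume (H '' Icc p q) ≤ ENNReal.ofReal (q - p) := by
  have hlim : Tendsto (fun m : ℕ => ENNReal.ofReal (q - p + 2 * ((2 ^ (d * m) : ℕ) : ℝ)⁻¹))
      atTop (𝓝 (ENNReal.ofReal (q - p))) :=
    ENNReal.tendsto_ofReal (by
      simpa using ((tendsto_inv_two_pow_mul_atTop hd).const_mul 2).const_add (q - p))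
  exact ge_of_tendsto' hlim fun m => hH.volume_image_Icc_le_add m hp hq

lemma card_mul_inv_le_volume_biUnion_image (hH : IsHilbertCurve d H) {S : Finset ℕ}
    (hS : S ⊆ range (2 ^ (d * m))) :
    (#S : ℝ≥0∞) * ((2 ^ (d * m) : ℕ) : ℝ≥0∞)⁻¹ ≤
      volume (⋃ k ∈ S, H '' gridIcc (2 ^ (d * m)) k) := by
  set N := 2 ^ (d * m)
  have hN : N ≠ 0 := by positivity
  set T := range N \ S
  have hcover : unitCube d ⊆ (⋃ k ∈ S, H '' gridIcc N k) ∪ ⋃ k ∈ T, H '' gridIcc N k := by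
    rw [← hH.2.1]
    rintro _ ⟨t, ht, rfl⟩
    obtain ⟨k, hk, htk⟩ := exists_mem_gridIcc hN ht
    by_cases hkS : k ∈ S
    · exact Or.inl (mem_biUnion hkS ⟨t, htk, rfl⟩)
    · exact Or.inr (mem_biUnion (mem_sdiff.2 ⟨mem_range.2 hk, hkS⟩) ⟨t, htk, rfl⟩)
  have hT : volume (⋃ k ∈ T, H '' gridIcc N k) ≤ #T * (N : ℝ≥0∞)⁻¹ := by
    refine (measure_biUnion_finset_le _ _).trans_eq ?_
    rw [sum_congr rfl fun k hk => hH.volume_image_gridIcc (mem_range.1 (sdiff_subset hk)),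
      sum_const, nsmul_eq_mul]
  have htotal : #S * (N : ℝ≥0∞)⁻¹ + #T * (N : ℝ≥0∞)⁻¹ = 1 := by
    rw [← add_mul, ← Nat.cast_add, add_comm, card_sdiff_add_card_eq_card hS, card_range,
      ENNReal.mul_inv_cancel (by simpa using hN) (ENNReal.natCast_ne_top N)]
  refine ENNReal.le_of_add_le_add_right (a := #T * (N : ℝ≥0∞)⁻¹) (by finiteness) ?_
  calc #S * (N : ℝ≥0∞)⁻¹ + #T * (N : ℝ≥0∞)⁻¹ = volume (unitCube d) := by
        rw [htotal, volume_unitCube]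
    _ ≤ volume (⋃ k ∈ S, H '' gridIcc N k) + volume (⋃ k ∈ T, H '' gridIcc N k) :=
        (measure_mono hcover).trans (measure_union_le _ _)
    _ ≤ _ := by gcongr

lemma volume_preimage_inter_Icc_le (hH : IsHilbertCurve d H) (hd : d ≠ 0)
    {U : Set (EuclideanSpace ℝ (Fin d))} (hU : IsOpen U) :
    volume (H ⁻¹' U ∩ Icc 0 1) ≤ volume U := by
  classical
  let good (m : ℕ) : Finset ℕ :=
    (range (2 ^ (d * m))).filter fun k => H '' gridIcc (2 ^ (d * m)) k ⊆ U
  let B (m : ℕ) : Set ℝ := ⋃ k ∈ good m, gridIcc (2 ^ (d * m)) k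
  refine measure_le_of_forall_eventually_mem (B := B) ?_ fun m => ?_
  · rintro t ⟨htU, ht⟩
    obtain ⟨δ, hδ, hball⟩ :=
      Metric.mem_nhds_iff.1 (hH.1.continuousAt.preimage_mem_nhds (hU.mem_nhds htU))
    filter_upwards [(tendsto_order.1 (tendsto_inv_two_pow_mul_atTop hd)).2 δ hδ] with m hm
    obtain ⟨k, hk, htk⟩ := exists_mem_gridIcc (N := 2 ^ (d * m)) (by positivity) ht
    refine mem_biUnion (mem_filter.2 ⟨mem_range.2 hk, ?_⟩) htk
    rintro _ ⟨s, hs, rfl⟩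
    exact hball ((dist_le_of_mem_gridIcc hs htk).trans_lt hm)
  · calc volume (B m) ≤ ∑ k ∈ good m, volume (gridIcc (2 ^ (d * m)) k) :=
          measure_biUnion_finset_le _ _
      _ = #(good m) * ((2 ^ (d * m) : ℕ) : ℝ≥0∞)⁻¹ := by simp [volume_gridIcc]
      _ ≤ volume (⋃ k ∈ good m, H '' gridIcc (2 ^ (d * m)) k) :=
          hH.card_mul_inv_le_volume_biUnion_image (filter_subset _ _)
      _ ≤ volume U := measure_mono (iUnion₂_subset fun k hk => (mem_filter.1 hk).2)

lemma map_volume_restrict_le (hH : IsHilbertCurve d H) (hd : d ≠ 0) :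
    (volume.restrict (Icc 0 1)).map H ≤ volume :=
  Measure.le_of_forall_isOpen_le fun U hU => by
    rw [Measure.map_apply hH.1.measurable hU.measurableSet,
      Measure.restrict_apply (hH.1.measurable hU.measurableSet)]
    exact hH.volume_preimage_inter_Icc_le hd hU

end IsHilbertCurve

theorem hilbert_image_measure_and_uniform_general
    (d : ℕ) (hd : 1 ≤ d) (H : ℝ → EuclideanSpace ℝ (Fin d)) (hH : IsHilbertCurve d H)
    (p q : ℝ) (hp : 0 ≤ p) (hq : q ≤ 1) :
    volume (H '' Set.Icc p q) = ENNReal.ofReal (q - p) ∧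
    Measure.map H (unifOnReal (Set.Icc p q)) = unifOn (H '' Set.Icc p q) := by
  have hd0 : d ≠ 0 := Nat.one_le_iff_ne_zero.1 hd
  have hHm : Measurable H := hH.1.measurable
  set A := H '' Icc p q
  set ν := (volume.restrict (Icc p q)).map H with hν_def
  have hνA : ν univ = ENNReal.ofReal (q - p) := by
    rw [Measure.map_apply hHm MeasurableSet.univ, preimage_univ, Measure.restrict_apply_univ,
      Real.volume_Icc]
  have hν_le : ν ≤ volume.restrict A := by
    have hA : MeasurableSet A := (isCompact_Icc.image hH.1).isClosed.measurableSet
    have hν_on_A : ν.restrict A = ν := Measure.restrict_eq_self_of_ae_mem <|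
      (ae_map_iff hHm.aemeasurable hA).2 <|
        ae_restrict_of_forall_mem measurableSet_Icc fun t ht => mem_image_of_mem H ht
    rw [← hν_on_A]
    exact Measure.restrict_mono le_rfl <|
      (Measure.map_mono (Measure.restrict_mono (Icc_subset_Icc hp hq) le_rfl) hHm).trans
        (hH.map_volume_restrict_le hd0)
  have hvolA : volume A = ENNReal.ofReal (q - p) :=
    le_antisymm (hH.volume_image_Icc_le hd0 hp hq) (by simpa [hνA] using hν_le univ)
  have hν : ν = volume.restrict A :=
    Measure.eq_of_le_of_measure_univ_eq hν_le (by rw [hνA, Measure.restrict_apply_univ, hvolA])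
  refine ⟨hvolA, ?_⟩
  rw [unifOnReal, unifOn, Measure.map_smul, ← hν_def, hν, hvolA, Real.volume_Icc]

theorem hilbert_image_measure_and_uniform
    (d : ℕ) (hd : 1 ≤ d) (H : ℝ → EuclideanSpace ℝ (Fin d)) (hH : IsHilbertCurve d H)
    (p q : ℝ) (hp : 0 ≤ p) (hpq : p < q) (hq : q ≤ 1) :
    volume (H '' Set.Icc p q) = ENNReal.ofReal (q - p) ∧
    Measure.map H (unifOnReal (Set.Icc p q)) = unifOn (H '' Set.Icc p q) :=
  hilbert_image_measure_and_uniform_general d hd H hH p q hp hq
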